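/- arXiv:2503.17190 — 2 statements merged into one kernel-verified Lean document; each statement's English description precedes it below -/
import Mathlib

section
/- Let a, m₁, n₁ ∈ ℝ³ with m₁, n₁ orthonormal, let θ ∈ ℝ with θ ∉ 2πℤ, and set m₂ = cos(θ) m₁ + sin(θ) n₁ and n₂ = −sin(θ) m₁ + cos(θ) n₁. Assume a · m₁ = a · m₂ (equality of the geodesic curvatures). Then the two normal curvatures are opposite: a · n₂ = −(a · n₁). -/
open Real
open scoped RealInnerProductSpace

/-- Wherever the surface is folded (`θ ∉ 2πℤ`), equality of the geodesic curvatures implies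
that the two normal curvatures are opposite: `μ₂ = -μ₁`. -/
theorem normal_curvatures_opposite
    (a m₁ n₁ : EuclideanSpace ℝ (Fin 3)) (θ : ℝ)
    (hm₁ : ‖m₁‖ = 1) (hn₁ : ‖n₁‖ = 1) (hmn : ⟪m₁, n₁⟫ = 0)
    (hθ : ∀ k : ℤ, θ ≠ 2 * π * k)
    (m₂ n₂ : EuclideanSpace ℝ (Fin 3))
    (hm₂ : m₂ = Real.cos θ • m₁ + Real.sin θ • n₁)
    (hn₂ : n₂ = -Real.sin θ • m₁ + Real.cos θ • n₁)
    (hκ : ⟪a, m₁⟫ = ⟪a, m₂⟫) :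
    ⟪a, n₂⟫ = -⟪a, n₁⟫ := by
  subst hm₂ hn₂
  simp only [inner_add_right, inner_smul_right] at hκ ⊢
  set x := ⟪a, m₁⟫ with hx
  set y := ⟪a, n₁⟫ with hy
  have hS : Real.sin (θ / 2) ≠ 0 := by
    intro h
    rw [Real.sin_eq_zero_iff] at h
    obtain ⟨k, hk⟩ := h
    exact hθ k (by linarith)
  have hθ2 : θ = 2 * (θ / 2) := by ring
  have hc : Real.cos θ = 1 - 2 * Real.sin (θ / 2) ^ 2 := by
    rw [hθ2, Real.cos_two_mul, ← Real.sin_sq_add_cos_sq (θ / 2)]; ring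
  have hs : Real.sin θ = 2 * Real.sin (θ / 2) * Real.cos (θ / 2) := by
    conv_lhs => rw [hθ2, Real.sin_two_mul]
  rw [hc, hs] at hκ ⊢
  have key : Real.sin (θ / 2) * x = Real.cos (θ / 2) * y := by
    apply mul_left_cancel₀ hS
    nlinarith [hκ]
  linear_combination (-2 * Real.cos (θ / 2)) * key - 2 * y * Real.sin_sq_add_cos_sq (θ / 2)
end

section
/- Let ω ⊂ ℝ² be open and v : ℝ² → ℝ³ be C² on ω with (∇v(x))ᵀ (∇v(x)) = I_{2×2} for all x ∈ ω. Define the unit normal n(x) = ∂₁v(x) × ∂₂v(x). Then for every x ∈ ω, Σ_{i,j∈{1,2}} ‖∂_i ∂_j v(x)‖² = Σ_{i,j∈{1,2}} ⟨n(x), ∂_i ∂_j v(x)⟩², i.e., the Frobenius norm of the Hessian D²v equals the Frobenius norm of the second fundamental form H_{n∘v} with entries (H_{n∘v})_{ij} = ⟨n, ∂_i ∂_j v⟩. -/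
open scoped RealInnerProductSpace

/-- The cross product on `ℝ³ = EuclideanSpace ℝ (Fin 3)`. -/
def cross3 (u v : EuclideanSpace ℝ (Fin 3)) : EuclideanSpace ℝ (Fin 3) :=
  WithLp.toLp 2 ![u 1 * v 2 - u 2 * v 1, u 2 * v 0 - u 0 * v 2, u 0 * v 1 - u 1 * v 0]

/-- If `e1, e2` are orthonormal in `ℝ³` and `w` is orthogonal to both, then
`‖w‖² = ⟪e1 × e2, w⟫²`. -/
lemma cross3_aux (e1 e2 w : EuclideanSpace ℝ (Fin 3))
    (h11 : ⟪e1, e1⟫ = 1) (h22 : ⟪e2, e2⟫ = 1) (h12 : ⟪e1, e2⟫ = 0)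
    (h1w : ⟪e1, w⟫ = 0) (h2w : ⟪e2, w⟫ = 0) :
    ‖w‖ ^ 2 = ⟪cross3 e1 e2, w⟫ ^ 2 := by
  rw [← real_inner_self_eq_norm_sq]
  simp only [cross3, PiLp.toLp_apply, WithLp.ofLp_toLp, PiLp.inner_apply, RCLike.inner_apply, starRingEnd_apply, star_trivial,
    Fin.sum_univ_three, Matrix.cons_val_zero, Matrix.cons_val_one, Matrix.head_cons,
    Matrix.cons_val_two, Matrix.tail_cons] at *
  set a := e1 0; set b := e1 1; set c := e1 2
  set d := e2 0; set e := e2 1; set f := e2 2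
  set p := w 0; set q := w 1; set r := w 2
  linear_combination (-(p ^ 2 + q ^ 2 + r ^ 2) * (d ^ 2 + e ^ 2 + f ^ 2)) * h11 +
    (-(p ^ 2 + q ^ 2 + r ^ 2)) * h22 +
    ((p ^ 2 + q ^ 2 + r ^ 2) * (a * d + b * e + c * f)) * h12 +
    ((d ^ 2 + e ^ 2 + f ^ 2) * (a * p + b * q + c * r) -
      2 * (a * d + b * e + c * f) * (d * p + e * q + f * r)) * h1w +
    ((a ^ 2 + b ^ 2 + c ^ 2) * (d * p + e * q + f * r)) * h2w

/-- For a `C²` isometric deformation `v : ℝ² → ℝ³` with unit normal `n = ∂₁v × ∂₂v`,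
the Frobenius norm of the Hessian `D²v` equals the Frobenius norm of the second
fundamental form with entries `⟨n, ∂ᵢ∂ⱼv⟩`. -/
theorem frobenius_hessian_eq_second_fundamental_form
    (ω : Set (EuclideanSpace ℝ (Fin 2))) (hω : IsOpen ω)
    (v : EuclideanSpace ℝ (Fin 2) → EuclideanSpace ℝ (Fin 3))
    (hv : ContDiffOn ℝ 2 v ω)
    (hiso : ∀ x ∈ ω, ∀ i j : Fin 2,
      ⟪fderiv ℝ v x (EuclideanSpace.single i 1), fderiv ℝ v x (EuclideanSpace.single j 1)⟫
        = if i = j then 1 else 0)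
    (n : EuclideanSpace ℝ (Fin 2) → EuclideanSpace ℝ (Fin 3))
    (hn : ∀ x, n x = cross3 (fderiv ℝ v x (EuclideanSpace.single 0 1))
                            (fderiv ℝ v x (EuclideanSpace.single 1 1))) :
    ∀ x ∈ ω,
      ∑ i : Fin 2, ∑ j : Fin 2,
        ‖fderiv ℝ (fun y => fderiv ℝ v y (EuclideanSpace.single j 1)) x
            (EuclideanSpace.single i 1)‖ ^ 2
      = ∑ i : Fin 2, ∑ j : Fin 2,
          ⟪n x, fderiv ℝ (fun y => fderiv ℝ v y (EuclideanSpace.single j 1)) x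
              (EuclideanSpace.single i 1)⟫ ^ 2 := by
  intro x hx
  have hmem : ω ∈ nhds x := hω.mem_nhds hx
  -- the first derivative is differentiable at `x`
  have hD : DifferentiableAt ℝ (fderiv ℝ v) x :=
    ((hv.fderiv_of_isOpen (m := 1) hω (by norm_num)).differentiableOn
      one_ne_zero).differentiableAt hmem
  -- second derivative as a bilinear object
  set D2 : EuclideanSpace ℝ (Fin 2) →L[ℝ]
      EuclideanSpace ℝ (Fin 2) →L[ℝ] EuclideanSpace ℝ (Fin 3) :=
    fderiv ℝ (fderiv ℝ v) x with hD2
  -- for each `j`, the partial derivative map is differentiable at `x`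
  have hfd : ∀ j : Fin 2,
      DifferentiableAt ℝ (fun y => fderiv ℝ v y (EuclideanSpace.single j 1)) x :=
    fun j => hD.clm_apply (differentiableAt_const _)
  -- identify directional derivatives of partials with `D2`
  have hfderiv : ∀ k j : Fin 2,
      fderiv ℝ (fun y => fderiv ℝ v y (EuclideanSpace.single j 1)) x
        (EuclideanSpace.single k 1)
      = D2 (EuclideanSpace.single k 1) (EuclideanSpace.single j 1) := by
    intro k j
    rw [fderiv_clm_apply hD (differentiableAt_const _)]
    simp [hD2]
  -- symmetry of second derivatives
  have hsym : ∀ u w : EuclideanSpace ℝ (Fin 2), D2 u w = D2 w u :=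
    (hv.contDiffAt hmem).isSymmSndFDerivAt (by simp)
  -- differentiate the isometry constraint
  have hzero : ∀ k i j : Fin 2,
      ⟪fderiv ℝ v x (EuclideanSpace.single i 1),
        D2 (EuclideanSpace.single k 1) (EuclideanSpace.single j 1)⟫ +
      ⟪D2 (EuclideanSpace.single k 1) (EuclideanSpace.single i 1),
        fderiv ℝ v x (EuclideanSpace.single j 1)⟫ = 0 := by
    intro k i j
    have hEq : (fun y => ⟪fderiv ℝ v y (EuclideanSpace.single i 1),
        fderiv ℝ v y (EuclideanSpace.single j 1)⟫)
        =ᶠ[nhds x] fun _ => (if i = j then (1 : ℝ) else 0) := by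
      filter_upwards [hmem] with y hy using hiso y hy i j
    have h0 : fderiv ℝ (fun y => ⟪fderiv ℝ v y (EuclideanSpace.single i 1),
        fderiv ℝ v y (EuclideanSpace.single j 1)⟫) x = 0 := by
      rw [hEq.fderiv_eq]; exact fderiv_const_apply _
    have := fderiv_inner_apply (𝕜 := ℝ) (hfd i) (hfd j) (EuclideanSpace.single k 1)
    rw [h0, hfderiv k i, hfderiv k j] at this
    simpa using this.symm
  -- tangential components of second derivatives vanish
  have hb0 : ∀ k i j : Fin 2,
      ⟪D2 (EuclideanSpace.single k 1) (EuclideanSpace.single i 1),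
        fderiv ℝ v x (EuclideanSpace.single j 1)⟫ = 0 := by
    have b0 : ∀ k i j : Fin 2,
        ⟪fderiv ℝ v x (EuclideanSpace.single i 1),
          D2 (EuclideanSpace.single k 1) (EuclideanSpace.single j 1)⟫ =
        ⟪D2 (EuclideanSpace.single k 1) (EuclideanSpace.single j 1),
          fderiv ℝ v x (EuclideanSpace.single i 1)⟫ :=
      fun k i j => real_inner_comm _ _
    intro k i j
    have e1 := hzero k i j
    have e3 := hzero j k i
    have e5 := hzero i j k
    rw [b0] at e1 e3 e5
    rw [hsym (EuclideanSpace.single j 1) (EuclideanSpace.single k 1)] at e3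
    rw [hsym (EuclideanSpace.single i 1) (EuclideanSpace.single j 1)] at e5
    rw [show D2 (EuclideanSpace.single i 1) (EuclideanSpace.single k 1)
        = D2 (EuclideanSpace.single k 1) (EuclideanSpace.single i 1) from hsym _ _] at e5
    linarith
  -- orthonormality at `x`
  have h00 := hiso x hx 0 0
  have h11' := hiso x hx 1 1
  have h01 := hiso x hx 0 1
  rw [if_pos rfl] at h00 h11'; rw [if_neg (by decide)] at h01
  -- conclude term by term
  simp only [hfderiv]
  refine Finset.sum_congr rfl fun i _ => Finset.sum_congr rfl fun j _ => ?_
  rw [hn x]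
  refine cross3_aux _ _ _ h00 h11' h01 ?_ ?_
  · rw [real_inner_comm]; exact hb0 i j 0
  · rw [real_inner_comm]; exact hb0 i j 1
end
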